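/- arXiv:1606.01370 — 3 statements merged into one kernel-verified Lean document; each statement's English description precedes it below -/
import Mathlib

section
/- Let 0 < δ < 1 and t₀ > 0. There exists a function p ∈ C²((0,t₀)) ∩ C([0,t₀]) with −p'' = p^{−δ} on (0,t₀), p(0) = 0, p > 0 on (0,t₀), and constants c₁, c₂ > 0 such that c₁ t ≤ p(t) ≤ c₂ t for all t in a neighborhood of 0. -/
open Real Set Filter Topology

theorem stmt_3 (δ t₀ : ℝ) (hδ0 : 0 < δ) (hδ1 : δ < 1) (ht₀ : 0 < t₀) :
    ∃ p : ℝ → ℝ,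
      ContinuousOn p (Icc 0 t₀) ∧
      ContDiffOn ℝ 2 p (Ioo 0 t₀) ∧
      (∀ t ∈ Ioo 0 t₀, deriv (deriv p) t = -(p t ^ (-δ))) ∧
      p 0 = 0 ∧
      (∀ t ∈ Ioo 0 t₀, 0 < p t) ∧
      ∃ c₁ > (0:ℝ), ∃ c₂ > (0:ℝ), ∃ ε > (0:ℝ),
        ∀ t ∈ Ioo (0:ℝ) ε, c₁ * t ≤ p t ∧ p t ≤ c₂ * t := by
  set b : ℝ := 1 - δ with hbdef
  have hb : 0 < b := by simp [hbdef]; linarith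
  have hb1 : b ≤ 1 := by simp [hbdef]; linarith
  set k : ℝ := 2 / b with hkdef
  have hk : 0 < k := by positivity
  set Y : ℝ := max 1 (2 * k * t₀ ^ 2) with hYdef
  have hY1 : (1:ℝ) ≤ Y := le_max_left _ _
  have hY0 : (0:ℝ) < Y := by linarith
  set A : ℝ := 2 * k * Y ^ b with hAdef
  have hYb : 0 < Y ^ b := rpow_pos_of_pos hY0 b
  have hA : 0 < A := by positivity
  set q : ℝ → ℝ := fun s => max (A - k * s ^ b) (A / 2) with hqdef
  set g : ℝ → ℝ := fun s => q s ^ (-(2:ℝ)⁻¹) with hgdef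
  have hq_pos : ∀ s, 0 < q s := fun s => lt_of_lt_of_le (by positivity) (le_max_right _ _)
  have hg_pos : ∀ s, 0 < g s := fun s => rpow_pos_of_pos (hq_pos s) _
  have hq_cont : Continuous q := by
    have h1 : Continuous fun s : ℝ => s ^ b :=
      continuous_iff_continuousAt.mpr (fun x => continuousAt_rpow_const x b (Or.inr hb.le))
    exact (continuous_const.sub (continuous_const.mul h1)).max continuous_const
  have hg_cont : Continuous g := by
    refine continuous_iff_continuousAt.mpr fun x => ?_
    exact hq_cont.continuousAt.rpow_const (Or.inl (hq_pos x).ne')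
  set G : ℝ → ℝ := fun y => ∫ s in (0:ℝ)..y, g s with hGdef
  have hG_deriv : ∀ y, HasDerivAt G (g y) y := fun y =>
    intervalIntegral.integral_hasDerivAt_right (hg_cont.intervalIntegrable _ _)
      (hg_cont.stronglyMeasurableAtFilter _ _) hg_cont.continuousAt
  have hG_cont : Continuous G :=
    continuous_iff_continuousAt.mpr fun y => (hG_deriv y).continuousAt
  have hG_mono : StrictMono G := by
    intro y1 y2 h
    have hpos : 0 < ∫ s in y1..y2, g s :=
      intervalIntegral.intervalIntegral_pos_of_pos (hg_cont.intervalIntegrable _ _) hg_pos h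
    have hadd : G y1 + ∫ s in y1..y2, g s = G y2 :=
      intervalIntegral.integral_add_adjacent_intervals (hg_cont.intervalIntegrable _ _)
        (hg_cont.intervalIntegrable _ _)
    linarith
  have hG0 : G 0 = 0 := intervalIntegral.integral_same
  have hq_eq : ∀ s ∈ Icc (0:ℝ) Y, q s = A - k * s ^ b := by
    intro s hs
    apply max_eq_left
    have h1 : s ^ b ≤ Y ^ b := rpow_le_rpow hs.1 hs.2 hb.le
    have h2 : k * s ^ b ≤ k * Y ^ b := by nlinarith
    rw [hAdef]; linarith
  have hg_le : ∀ s, g s ≤ (A/2) ^ (-(2:ℝ)⁻¹) := fun s =>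
    rpow_le_rpow_of_nonpos (by positivity) (le_max_right _ _) (by norm_num)
  have hg_ge : ∀ s ∈ Icc (0:ℝ) Y, A ^ (-(2:ℝ)⁻¹) ≤ g s := by
    intro s hs
    apply rpow_le_rpow_of_nonpos (hq_pos s) ?_ (by norm_num)
    rw [hq_eq s hs]
    have h1 : 0 ≤ s ^ b := rpow_nonneg hs.1 b
    nlinarith
  have hG_lin : ∀ y ∈ Icc (0:ℝ) Y, A ^ (-(2:ℝ)⁻¹) * y ≤ G y ∧ G y ≤ (A/2) ^ (-(2:ℝ)⁻¹) * y := by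
    intro y hy
    constructor
    · have h1 := intervalIntegral.integral_mono_on hy.1 (intervalIntegrable_const (μ := MeasureTheory.volume))
        (hg_cont.intervalIntegrable _ _)
        (fun s hs => hg_ge s ⟨hs.1, le_trans hs.2 hy.2⟩)
      simpa [intervalIntegral.integral_const, smul_eq_mul, mul_comm] using h1
    · have h1 := intervalIntegral.integral_mono_on hy.1 (hg_cont.intervalIntegrable _ _)
        (intervalIntegrable_const (μ := MeasureTheory.volume)) (fun s _ => hg_le s)
      simpa [intervalIntegral.integral_const, smul_eq_mul, mul_comm] using h1
  have ht₀Y : t₀ ≤ G Y := by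
    have h1 : A ^ (-(2:ℝ)⁻¹) * Y ≤ G Y := (hG_lin Y ⟨hY0.le, le_refl _⟩).1
    have hsA : Real.sqrt A ≤ Y / t₀ := by
      have hAle : A ≤ (Y / t₀) ^ 2 := by
        have h2 : Y ^ b ≤ Y ^ (1:ℝ) := rpow_le_rpow_of_exponent_le hY1 hb1
        rw [rpow_one] at h2
        have h3 : 2 * k * t₀ ^ 2 ≤ Y := le_max_right _ _
        have h4 : A ≤ 2 * k * Y := by rw [hAdef]; nlinarith
        rw [div_pow]
        rw [le_div_iff₀ (by positivity)]
        nlinarith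
      calc Real.sqrt A ≤ Real.sqrt ((Y / t₀) ^ 2) := Real.sqrt_le_sqrt hAle
        _ = Y / t₀ := Real.sqrt_sq (by positivity)
    have hsApos : 0 < Real.sqrt A := Real.sqrt_pos.mpr hA
    have hAhalf : A ^ (-(2:ℝ)⁻¹) = (Real.sqrt A)⁻¹ := by
      rw [Real.sqrt_eq_rpow, ← Real.rpow_neg hA.le]
      norm_num
    have h5 : t₀ * Real.sqrt A ≤ Y := by
      rw [le_div_iff₀ ht₀] at hsA
      nlinarith
    have h6 : t₀ ≤ A ^ (-(2:ℝ)⁻¹) * Y := by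
      rw [hAhalf, ← div_eq_inv_mul, le_div_iff₀ hsApos]
      linarith
    linarith
  set p : ℝ → ℝ := Function.invFun G with hpdef
  have hGinj : Function.Injective G := hG_mono.injective
  have hsurj : ∀ t ∈ Icc (G (-1)) (G (Y+1)), ∃ y, G y = t := by
    intro t ht
    obtain ⟨y, _, hy⟩ := intermediate_value_Icc (by linarith : (-1:ℝ) ≤ Y+1) hG_cont.continuousOn ht
    exact ⟨y, hy⟩
  have hGp : ∀ t ∈ Icc (G (-1)) (G (Y+1)), G (p t) = t := fun t ht =>
    Function.invFun_eq (hsurj t ht)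
  have hIccsub : Icc (0:ℝ) t₀ ⊆ Ioo (G (-1)) (G (Y+1)) := by
    intro t ht
    have h1 : G (-1) < 0 := by
      have h := hG_mono (show (-1:ℝ) < 0 by norm_num)
      rwa [hG0] at h
    have h2 : G Y < G (Y+1) := hG_mono (by linarith)
    exact ⟨by linarith [ht.1], by linarith [ht.2, ht₀Y]⟩
  have hGp' : ∀ t ∈ Icc (0:ℝ) t₀, G (p t) = t := fun t ht =>
    hGp t (Ioo_subset_Icc_self (hIccsub ht))
  have hp_mem : ∀ t ∈ Icc (0:ℝ) t₀, p t ∈ Icc (0:ℝ) Y := by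
    intro t ht
    constructor
    · have : G 0 ≤ G (p t) := by rw [hG0, hGp' t ht]; exact ht.1
      exact hG_mono.le_iff_le.mp this
    · have : G (p t) ≤ G Y := by rw [hGp' t ht]; exact le_trans ht.2 ht₀Y
      exact hG_mono.le_iff_le.mp this
  have hp0 : p 0 = 0 := by
    apply hGinj
    rw [hGp' 0 ⟨le_refl _, ht₀.le⟩, hG0]
  have hp_pos : ∀ t ∈ Ioo (0:ℝ) t₀, 0 < p t := by
    intro t ht
    have : G 0 < G (p t) := by
      rw [hG0, hGp' t ⟨ht.1.le, ht.2.le⟩]; exact ht.1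
    exact hG_mono.lt_iff_lt.mp this
  have hp_cont : ∀ t ∈ Icc (0:ℝ) t₀, ContinuousAt p t := by
    intro t ht
    have hmem := hIccsub ht
    have hGx : G (p t) = t := hGp' t ht
    have hx1 : -1 < p t := by
      apply hG_mono.lt_iff_lt.mp; rw [hGx]; exact hmem.1
    have hx2 : p t < Y + 1 := by
      apply hG_mono.lt_iff_lt.mp; rw [hGx]; exact hmem.2
    rw [Metric.continuousAt_iff]
    intro ε hε
    set ε' : ℝ := min ε (min ((p t + 1)/2) ((Y + 1 - p t)/2)) with hε'def
    have hε'pos : 0 < ε' := by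
      apply lt_min hε
      apply lt_min <;> linarith
    have hε'le : ε' ≤ ε := min_le_left _ _
    have hlo : -1 < p t - ε' := by
      have : ε' ≤ (p t + 1)/2 := le_trans (min_le_right _ _) (min_le_left _ _)
      linarith
    have hhi : p t + ε' < Y + 1 := by
      have : ε' ≤ (Y + 1 - p t)/2 := le_trans (min_le_right _ _) (min_le_right _ _)
      linarith
    refine ⟨min (t - G (p t - ε')) (G (p t + ε') - t), ?_, ?_⟩
    · apply lt_min
      · have : G (p t - ε') < G (p t) := hG_mono (by linarith)
        rw [hGx] at this; linarith
      · have : G (p t) < G (p t + ε') := hG_mono (by linarith)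
        rw [hGx] at this; linarith
    · intro y hy
      rw [Real.dist_eq, abs_lt] at hy
      have hy1 : G (p t - ε') < y := by
        have := hy.1
        have h2 := min_le_left (t - G (p t - ε')) (G (p t + ε') - t)
        linarith
      have hy2 : y < G (p t + ε') := by
        have := hy.2
        have h2 := min_le_right (t - G (p t - ε')) (G (p t + ε') - t)
        linarith
      have hymem : y ∈ Icc (G (-1)) (G (Y+1)) := by
        constructor
        · exact le_trans (hG_mono (by linarith)).le hy1.le
        · exact le_trans hy2.le (hG_mono (by linarith)).le
      have hGpy : G (p y) = y := hGp y hymem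
      have hb1' : p t - ε' < p y := by
        apply hG_mono.lt_iff_lt.mp; rw [hGpy]; exact hy1
      have hb2' : p y < p t + ε' := by
        apply hG_mono.lt_iff_lt.mp; rw [hGpy]; exact hy2
      rw [Real.dist_eq, abs_lt]
      constructor <;> linarith
  have hp_contOn : ContinuousOn p (Icc 0 t₀) := fun t ht => (hp_cont t ht).continuousWithinAt
  have hginv : ∀ t ∈ Icc (0:ℝ) t₀, (g (p t))⁻¹ = (A - k * (p t) ^ b) ^ ((2:ℝ)⁻¹) := by
    intro t ht
    have hmem := hp_mem t ht
    have hqe := hq_eq (p t) hmem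
    have hqp := hq_pos (p t)
    rw [hgdef]
    simp only
    rw [hqe, Real.rpow_neg (by rw [← hqe]; exact hqp.le), inv_inv]
  have hp_deriv : ∀ t ∈ Ioo (0:ℝ) t₀, HasDerivAt p ((A - k * (p t) ^ b) ^ ((2:ℝ)⁻¹)) t := by
    intro t ht
    have htIcc : t ∈ Icc (0:ℝ) t₀ := ⟨ht.1.le, ht.2.le⟩
    have hloc : ∀ᶠ y in 𝓝 t, G (p y) = y := by
      have hmem : Ioo (G (-1)) (G (Y+1)) ∈ 𝓝 t := isOpen_Ioo.mem_nhds (hIccsub htIcc)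
      filter_upwards [hmem] with y hy using hGp y (Ioo_subset_Icc_self hy)
    have h1 := HasDerivAt.of_local_left_inverse (hp_cont t htIcc) (hG_deriv (p t))
      (hg_pos (p t)).ne' hloc
    rwa [hginv t htIcc] at h1
  have hval_pos : ∀ t ∈ Icc (0:ℝ) t₀, 0 < A - k * (p t) ^ b := by
    intro t ht
    have := hq_pos (p t)
    rwa [hq_eq (p t) (hp_mem t ht)] at this
  set h : ℝ → ℝ := fun t => (A - k * (p t) ^ b) ^ ((2:ℝ)⁻¹) with hhdef
  have hh_deriv : ∀ t ∈ Ioo (0:ℝ) t₀, HasDerivAt h (-(p t ^ (-δ))) t := by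
    intro t ht
    have htIcc : t ∈ Icc (0:ℝ) t₀ := ⟨ht.1.le, ht.2.le⟩
    have hx0 : 0 < p t := hp_pos t ht
    have hv : 0 < A - k * (p t) ^ b := hval_pos t htIcc
    have hp := hp_deriv t ht
    have h2 := hp.rpow_const (p := b) (Or.inl hx0.ne')
    have h1 := (h2.const_mul k).const_sub A
    have h3 := h1.rpow_const (p := (2:ℝ)⁻¹) (Or.inl hv.ne')
    have hbd : b - 1 = -δ := by rw [hbdef]; ring
    rw [hbd] at h3
    have hkb : k * b = 2 := by rw [hkdef]; field_simp
    have hvv : (A - k * (p t) ^ b) ^ ((2:ℝ)⁻¹) * (A - k * (p t) ^ b) ^ ((2:ℝ)⁻¹ - 1) = 1 := by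
      rw [← Real.rpow_add hv]
      norm_num
    convert h3 using 1
    linear_combination (k * b * p t ^ (-δ)/2) * hvv + (p t ^ (-δ)/2) * hkb
  have hderiv_eq : ∀ t ∈ Ioo (0:ℝ) t₀, deriv p t = h t := fun t ht => (hp_deriv t ht).deriv
  refine ⟨p, hp_contOn, ?_, ?_, hp0, hp_pos, ?_⟩
  · -- ContDiffOn 2
    have h2 : (2 : WithTop ℕ∞) = 1 + 1 := by norm_num
    rw [h2, contDiffOn_succ_iff_deriv_of_isOpen isOpen_Ioo]
    refine ⟨fun y hy => (hp_deriv y hy).differentiableAt.differentiableWithinAt, ?_, ?_⟩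
    · intro hω; exact absurd hω (by norm_num)
    · apply ContDiffOn.congr (f := h) ?_ hderiv_eq
      have h1 : (1 : WithTop ℕ∞) = 0 + 1 := by norm_num
      rw [h1, contDiffOn_succ_iff_deriv_of_isOpen isOpen_Ioo]
      refine ⟨fun y hy => (hh_deriv y hy).differentiableAt.differentiableWithinAt, ?_, ?_⟩
      · intro hω; exact absurd hω (by norm_num)
      · rw [contDiffOn_zero]
        apply ContinuousOn.congr (f := fun t => -(p t ^ (-δ)))
        · apply ContinuousOn.neg
          apply ContinuousOn.rpow_const
          · exact fun y hy => (hp_cont y ⟨hy.1.le, hy.2.le⟩).continuousWithinAt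
          · exact fun y hy => Or.inl (hp_pos y hy).ne'
        · exact fun y hy => (hh_deriv y hy).deriv
  · -- the ODE
    intro t ht
    have hev : deriv p =ᶠ[𝓝 t] h := by
      filter_upwards [isOpen_Ioo.mem_nhds ht] with y hy using hderiv_eq y hy
    rw [hev.deriv_eq, (hh_deriv t ht).deriv]
  · -- linear bounds
    refine ⟨(A/2) ^ ((2:ℝ)⁻¹), rpow_pos_of_pos (by positivity) _,
      A ^ ((2:ℝ)⁻¹), rpow_pos_of_pos hA _, t₀, ht₀, ?_⟩
    intro t ht
    have htIcc : t ∈ Icc (0:ℝ) t₀ := ⟨ht.1.le, ht.2.le⟩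
    have hmem := hp_mem t htIcc
    have hlin := hG_lin (p t) hmem
    rw [hGp' t htIcc] at hlin
    have e1 : A ^ (-(2:ℝ)⁻¹) * A ^ ((2:ℝ)⁻¹) = 1 := by
      rw [← Real.rpow_add hA]; norm_num
    have e2 : (A/2) ^ (-(2:ℝ)⁻¹) * (A/2) ^ ((2:ℝ)⁻¹) = 1 := by
      rw [← Real.rpow_add (by positivity : (0:ℝ) < A/2)]; norm_num
    constructor
    · have h7 := mul_le_mul_of_nonneg_left hlin.2
        (rpow_pos_of_pos (show (0:ℝ) < A/2 by positivity) ((2:ℝ)⁻¹)).le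
      have h8 : (A/2) ^ ((2:ℝ)⁻¹) * ((A/2) ^ (-(2:ℝ)⁻¹) * p t) = p t := by
        rw [← mul_assoc, mul_comm ((A/2:ℝ) ^ ((2:ℝ)⁻¹)) _, e2, one_mul]
      rw [h8] at h7
      exact h7
    · have h7 := mul_le_mul_of_nonneg_left hlin.1 (rpow_pos_of_pos hA ((2:ℝ)⁻¹)).le
      have h8 : A ^ ((2:ℝ)⁻¹) * (A ^ (-(2:ℝ)⁻¹) * p t) = p t := by
        rw [← mul_assoc, mul_comm (A ^ ((2:ℝ)⁻¹)) _, e1, one_mul]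
      rw [h8] at h7
      exact h7
end

section
/- Let Ω ⊂ R^N be bounded, N ≥ 3, 2* = 2N/(N−2). Let u_λ ∈ L^{2*}(Ω) be nonnegative, and let (v_n) be a bounded sequence in L^{2*}(Ω) of nonnegative functions with v_n → v a.e. in Ω and v ∈ L^{2*}(Ω). Then ∫_Ω (u_λ + v_n)^{2*−1}(v − v_n) dx = −‖v − v_n‖_{L^{2*}}^{2*} + o(1) as n → ∞. -/
/-
With `b_n = u + v_n ≥ 0` and `t_n = v - v_n`, so that `b_n + t_n = u + v`, the quantity in question
is `∫ (b_n ^ (p - 1) * t_n + |t_n| ^ p)`. The integrand tends to `0` a.e., and the elementary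
inequality `|b ^ (p - 1) * t + |t| ^ p| ≤ ε * b ^ p + C_ε * (b + t) ^ p` (for `b, b + t ≥ 0`)
dominates it by `ε` times the `L¹`-bounded sequence `b_n ^ p` plus a fixed integrable function.
As in the Brezis–Lieb lemma, dominated convergence applied to the positive part of
`|integrand| - ε * b_n ^ p` then shows that the integrals tend to `0`.
-/

open Real MeasureTheory Filter Topology

namespace Real

lemma rpow_sub_one_mul_self {x : ℝ} (hx : 0 ≤ x) {p : ℝ} (hp : p ≠ 0) :
    x ^ (p - 1) * x = x ^ p := by
  simpa using (rpow_add_one' hx (by simpa using hp) : x ^ (p - 1 + 1) = _).symm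

lemma exists_rpow_ge_one_sub {q ε : ℝ} (hq : 0 < q) (hε : 0 < ε) :
    ∃ γ : ℝ, 0 < γ ∧ γ < 1 ∧ 1 - ε ≤ γ ^ q := by
  set e := min ε (1 / 2)
  have he : 0 < e := by positivity
  have he1 : e < 1 := by linarith [min_le_right ε (1 / 2)]
  refine ⟨(1 - e) ^ q⁻¹, by have := sub_pos.2 he1; positivity,
    rpow_lt_one (by linarith) (by linarith) (by positivity), ?_⟩
  rw [rpow_inv_rpow (by linarith) hq.ne']
  linarith [min_le_left ε (1 / 2)]

lemma rpow_sub_one_mul_sub_rpow_le {p ε : ℝ} (hp : 1 < p) (hε : 0 < ε) :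
    ∃ C : ℝ, 0 ≤ C ∧ ∀ b s : ℝ, 0 ≤ s → s ≤ b →
      b ^ (p - 1) * s - s ^ p ≤ ε * b ^ p + C * (b - s) ^ p := by
  obtain ⟨γ, hγ0, hγ1, hγ⟩ := exists_rpow_ge_one_sub (sub_pos.2 hp) hε
  have hδ : 0 < 1 - γ := sub_pos.2 hγ1
  refine ⟨((1 - γ) ^ p)⁻¹, by positivity, fun b s hs hsb => ?_⟩
  have hb : 0 ≤ b := hs.trans hsb
  have hsp : s ^ p = s ^ (p - 1) * s := (rpow_sub_one_mul_self hs (by linarith)).symm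
  rcases le_or_gt (γ * b) s with hγs | hsγ
  · -- `s` is comparable to `b`, so `s ^ (p - 1)` is close to `b ^ (p - 1)`
    have hclose : b ^ (p - 1) - s ^ (p - 1) ≤ ε * b ^ (p - 1) := by
      have : γ ^ (p - 1) * b ^ (p - 1) ≤ s ^ (p - 1) := by
        rw [← mul_rpow hγ0.le hb]
        exact rpow_le_rpow (by positivity) hγs (by linarith)
      linarith [mul_le_mul_of_nonneg_right hγ (rpow_nonneg hb (p - 1))]
    calc b ^ (p - 1) * s - s ^ p = (b ^ (p - 1) - s ^ (p - 1)) * s := by rw [hsp]; ring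
      _ ≤ ε * b ^ (p - 1) * b := mul_le_mul hclose hsb hs (by positivity)
      _ = ε * b ^ p := by rw [mul_assoc, rpow_sub_one_mul_self hb (by linarith)]
      _ ≤ ε * b ^ p + ((1 - γ) ^ p)⁻¹ * (b - s) ^ p := by
        have : 0 ≤ b - s := by linarith
        linarith [show 0 ≤ ((1 - γ) ^ p)⁻¹ * (b - s) ^ p by positivity]
  · -- `b - s` is comparable to `b`
    have hbs : (1 - γ) ^ p * b ^ p ≤ (b - s) ^ p := by
      rw [← mul_rpow hδ.le hb]
      exact rpow_le_rpow (by positivity) (by nlinarith) (by linarith)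
    have hfirst : b ^ (p - 1) * s ≤ b ^ p := by
      calc b ^ (p - 1) * s ≤ b ^ (p - 1) * b := by gcongr
        _ = b ^ p := rpow_sub_one_mul_self hb (by linarith)
    have hlast : b ^ p ≤ ((1 - γ) ^ p)⁻¹ * (b - s) ^ p := by
      rw [inv_mul_eq_div, le_div_iff₀ (by positivity), mul_comm]
      exact hbs
    linarith [rpow_nonneg hs p, mul_nonneg hε.le (rpow_nonneg hb p)]

lemma abs_rpow_sub_one_mul_add_abs_rpow_le {p ε : ℝ} (hp : 1 < p) (hε : 0 < ε) :
    ∃ C : ℝ, ∀ b t : ℝ, 0 ≤ b → 0 ≤ b + t →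
      |b ^ (p - 1) * t + |t| ^ p| ≤ ε * b ^ p + C * (b + t) ^ p := by
  obtain ⟨C, hC0, hC⟩ := rpow_sub_one_mul_sub_rpow_le hp hε
  refine ⟨C + 2, fun b t hb hbt => ?_⟩
  have hεb : 0 ≤ ε * b ^ p := by positivity
  have hCa : 0 ≤ C * (b + t) ^ p := by positivity
  rcases le_or_gt 0 t with ht | ht
  · have h1 : b ^ (p - 1) * t ≤ (b + t) ^ p := by
      calc b ^ (p - 1) * t ≤ (b + t) ^ (p - 1) * (b + t) := by
            gcongr <;> linarith
        _ = (b + t) ^ p := rpow_sub_one_mul_self hbt (by linarith)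
    have h2 : |t| ^ p ≤ (b + t) ^ p := by
      rw [abs_of_nonneg ht]
      exact rpow_le_rpow ht (by linarith) (by linarith)
    rw [abs_of_nonneg (by positivity)]
    linarith
  · obtain ⟨s, rfl⟩ : ∃ s, t = -s := ⟨-t, (neg_neg t).symm⟩
    have hs : 0 < s := by linarith
    have hlow : s ^ p ≤ b ^ (p - 1) * s := by
      calc s ^ p = s ^ (p - 1) * s := (rpow_sub_one_mul_self hs.le (by linarith)).symm
        _ ≤ b ^ (p - 1) * s := by gcongr; linarith
    have hbs : 0 ≤ b - s := by linarith
    rw [abs_neg, abs_of_pos hs, mul_neg, abs_of_nonpos (by linarith), ← sub_eq_add_neg]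
    linarith [hC b s hs.le (by linarith), rpow_nonneg hbs p]

end Real

lemma Filter.Tendsto.rpow_sub_one_mul_add_abs_rpow {ι : Type*} {l : Filter ι} {b t : ι → ℝ}
    {b₀ p : ℝ} (hp : 1 < p) (hb : Tendsto b l (𝓝 b₀)) (ht : Tendsto t l (𝓝 0)) :
    Tendsto (fun i => b i ^ (p - 1) * t i + |t i| ^ p) l (𝓝 0) := by
  have hbp := hb.rpow_const (Or.inr (by linarith : 0 ≤ p - 1))
  have htp := ht.abs.rpow_const (Or.inr (by linarith : 0 ≤ p))
  simpa [zero_rpow (by linarith : p ≠ 0)] using (hbp.mul ht).add htp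

namespace MeasureTheory

variable {α : Type*} [MeasurableSpace α] {μ : Measure α}

lemma MemLp.toReal_eLpNorm_rpow_eq_integral {f : α → ℝ} {p : ℝ} (hp : 0 < p)
    (hf : MemLp f (ENNReal.ofReal p) μ) :
    (eLpNorm f (ENNReal.ofReal p) μ).toReal ^ p = ∫ x, |f x| ^ p ∂μ := by
  rw [toReal_eLpNorm hf.1, lpNorm_eq_integral_norm_rpow_toReal (by simpa using hp)
    ENNReal.ofReal_ne_top hf.1, ENNReal.toReal_ofReal hp.le,
    rpow_inv_rpow (integral_nonneg fun x => by positivity) hp.ne']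
  rfl

lemma MemLp.integrable_abs_rpow {f : α → ℝ} {p : ℝ} (hp : 0 < p)
    (hf : MemLp f (ENNReal.ofReal p) μ) : Integrable (fun x => |f x| ^ p) μ := by
  simpa [ENNReal.toReal_ofReal hp.le] using
    hf.integrable_norm_rpow (by simpa using hp) ENNReal.ofReal_ne_top

/-- Hölder's inequality with exponents `p / (p - 1)` and `p`. -/
lemma MemLp.integrable_rpow_sub_one_mul {f g : α → ℝ} {p : ℝ} (hp : 1 < p)
    (hf : MemLp f (ENNReal.ofReal p) μ) (hf0 : ∀ᵐ x ∂μ, 0 ≤ f x)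
    (hg : MemLp g (ENNReal.ofReal p) μ) :
    Integrable (fun x => f x ^ (p - 1) * g x) μ := by
  have : ENNReal.HolderConjugate (ENNReal.ofReal (p / (p - 1))) (ENNReal.ofReal p) :=
    (Real.HolderConjugate.conjExponent hp).symm.ennrealOfReal
  have hf' : MemLp (fun x => ‖f x‖ ^ (p - 1)) (ENNReal.ofReal (p / (p - 1))) μ := by
    have := hf.norm_rpow_div (ENNReal.ofReal (p - 1))
    rwa [ENNReal.toReal_ofReal (by linarith), ← ENNReal.ofReal_div_of_pos (by linarith)] at this
  refine (hf'.integrable_mul hg).congr ?_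
  filter_upwards [hf0] with x hx
  simp only [Pi.mul_apply, norm_of_nonneg hx]

section EpsilonDomination

variable {φ g : ℕ → α → ℝ} {h : α → ℝ} {M : ℝ}

/-- The defect `(|φ n| - ε g n)⁺` is dominated by `|C h|`, so dominated convergence kills it. -/
lemma eventually_norm_integral_lt_mul_add (hφ : ∀ n, Integrable (φ n) μ)
    (hg : ∀ n, Integrable (g n) μ) (hg0 : ∀ n, 0 ≤ᵐ[μ] g n) (hgM : ∀ n, ∫ x, g n x ∂μ ≤ M)
    (hh : Integrable h μ) (hφ0 : ∀ᵐ x ∂μ, Tendsto (fun n => φ n x) atTop (𝓝 0))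
    {ε C : ℝ} (hε : 0 ≤ ε) (hdom : ∀ᵐ x ∂μ, ∀ n, |φ n x| ≤ ε * g n x + C * h x)
    {δ : ℝ} (hδ : 0 < δ) :
    ∀ᶠ n in atTop, ‖∫ x, φ n x ∂μ‖ < ε * M + δ := by
  set ψ : ℕ → α → ℝ := fun n x => max (|φ n x| - ε * g n x) 0
  have hg0' : ∀ᵐ x ∂μ, ∀ n, 0 ≤ g n x := ae_all_iff.2 hg0
  have hψm : ∀ n, AEStronglyMeasurable (ψ n) μ := fun n =>
    (((hφ n).abs.sub ((hg n).const_mul ε)).aestronglyMeasurable).sup aestronglyMeasurable_const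
  have hψC : ∀ n, ∀ᵐ x ∂μ, ‖ψ n x‖ ≤ ‖C * h x‖ := fun n => by
    filter_upwards [hdom] with x hx
    rw [norm_of_nonneg (le_max_right _ _)]
    exact max_le (by linarith [hx n, le_norm_self (C * h x)]) (norm_nonneg _)
  have hψ_int : ∀ n, Integrable (ψ n) μ := fun n =>
    (hh.const_mul C).norm.mono' (hψm n) (hψC n)
  have hψ_lim : Tendsto (fun n => ∫ x, ψ n x ∂μ) atTop (𝓝 0) := by
    have hψ0 : ∀ᵐ x ∂μ, Tendsto (fun n => ψ n x) atTop (𝓝 0) := by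
      filter_upwards [hφ0, hg0'] with x hx hgx
      refine squeeze_zero (fun n => le_max_right _ _) (fun n => ?_) (by simpa using hx.abs)
      exact max_le (by linarith [mul_nonneg hε (hgx n)]) (abs_nonneg _)
    simpa using tendsto_integral_of_dominated_convergence _ hψm (hh.const_mul C).norm hψC hψ0
  have hbound : ∀ n, ‖∫ x, φ n x ∂μ‖ ≤ ∫ x, ψ n x ∂μ + ε * M := fun n =>
    calc ‖∫ x, φ n x ∂μ‖ ≤ ∫ x, |φ n x| ∂μ := norm_integral_le_integral_norm _
      _ ≤ ∫ x, (ψ n x + ε * g n x) ∂μ :=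
        integral_mono (hφ n).abs ((hψ_int n).add ((hg n).const_mul ε)) fun x => by
          linarith [le_max_left (|φ n x| - ε * g n x) 0]
      _ = ∫ x, ψ n x ∂μ + ε * ∫ x, g n x ∂μ := by
        rw [integral_add (hψ_int n) ((hg n).const_mul ε), integral_const_mul]
      _ ≤ ∫ x, ψ n x ∂μ + ε * M := by gcongr; exact hgM n
  filter_upwards [hψ_lim.eventually_lt_const hδ] with n hn
  linarith [hbound n]

theorem tendsto_integral_zero_of_forall_abs_le_mul_add (hφ : ∀ n, Integrable (φ n) μ)
    (hg : ∀ n, Integrable (g n) μ) (hg0 : ∀ n, 0 ≤ᵐ[μ] g n) (hgM : ∀ n, ∫ x, g n x ∂μ ≤ M)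
    (hh : Integrable h μ) (hφ0 : ∀ᵐ x ∂μ, Tendsto (fun n => φ n x) atTop (𝓝 0))
    (hdom : ∀ ε > 0, ∃ C : ℝ, ∀ᵐ x ∂μ, ∀ n, |φ n x| ≤ ε * g n x + C * h x) :
    Tendsto (fun n => ∫ x, φ n x ∂μ) atTop (𝓝 0) := by
  rw [NormedAddGroup.tendsto_nhds_zero]
  intro δ hδ
  obtain ⟨ε, hε, hεM⟩ := exists_pos_mul_lt (half_pos hδ) M
  obtain ⟨C, hC⟩ := hdom ε hε
  filter_upwards [eventually_norm_integral_lt_mul_add hφ hg hg0 hgM hh hφ0 hε.le hC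
    (half_pos hδ)] with n hn
  linarith [mul_comm M ε]

end EpsilonDomination

theorem tendsto_integral_rpow_sub_one_mul_sub_add_eLpNorm_rpow {p : ℝ} (hp : 1 < p)
    {u v : α → ℝ} {w : ℕ → α → ℝ}
    (hu : MemLp u (ENNReal.ofReal p) μ) (hu0 : ∀ᵐ x ∂μ, 0 ≤ u x)
    (hv : MemLp v (ENNReal.ofReal p) μ) (hw : ∀ n, MemLp (w n) (ENNReal.ofReal p) μ)
    (hw0 : ∀ n, ∀ᵐ x ∂μ, 0 ≤ w n x)
    (hbdd : ∃ M : ENNReal, M < ⊤ ∧ ∀ n, eLpNorm (w n) (ENNReal.ofReal p) μ ≤ M)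
    (hae : ∀ᵐ x ∂μ, Tendsto (fun n => w n x) atTop (𝓝 (v x))) :
    Tendsto (fun n => (∫ x, (u x + w n x) ^ (p - 1) * (v x - w n x) ∂μ) +
      (eLpNorm (fun x => v x - w n x) (ENNReal.ofReal p) μ).toReal ^ p) atTop (𝓝 0) := by
  have hp0 : 0 < p := by linarith
  obtain ⟨M, hM, hwM⟩ := hbdd
  have hgood : ∀ᵐ x ∂μ, 0 ≤ u x + v x ∧ (∀ n, 0 ≤ u x + w n x) ∧
      Tendsto (fun n => w n x) atTop (𝓝 (v x)) := by
    filter_upwards [hu0, ae_all_iff.2 hw0, hae] with x hux hwx hx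
    exact ⟨add_nonneg hux (ge_of_tendsto' hx hwx), fun n => add_nonneg hux (hwx n), hx⟩
  have hvw n : MemLp (fun x => v x - w n x) (ENNReal.ofReal p) μ := hv.sub (hw n)
  have huw n : MemLp (fun x => u x + w n x) (ENNReal.ofReal p) μ := hu.add (hw n)
  have hI₁ n : Integrable (fun x => (u x + w n x) ^ (p - 1) * (v x - w n x)) μ :=
    (huw n).integrable_rpow_sub_one_mul hp (hgood.mono fun x hx => hx.2.1 n) (hvw n)
  have hI₂ n : Integrable (fun x => |v x - w n x| ^ p) μ := (hvw n).integrable_abs_rpow hp0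
  have hbound n : ∫ x, |u x + w n x| ^ p ∂μ ≤ (eLpNorm u (ENNReal.ofReal p) μ + M).toReal ^ p := by
    rw [← (huw n).toReal_eLpNorm_rpow_eq_integral hp0]
    gcongr
    · exact ENNReal.add_ne_top.2 ⟨hu.eLpNorm_ne_top, hM.ne⟩
    calc eLpNorm (fun x => u x + w n x) (ENNReal.ofReal p) μ
        ≤ eLpNorm u (ENNReal.ofReal p) μ + eLpNorm (w n) (ENNReal.ofReal p) μ :=
          eLpNorm_add_le hu.1 (hw n).1 (by simpa using hp.le)
      _ ≤ eLpNorm u (ENNReal.ofReal p) μ + M := by gcongr; exact hwM n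
  simp_rw [(hvw _).toReal_eLpNorm_rpow_eq_integral hp0]
  refine (tendsto_integral_zero_of_forall_abs_le_mul_add (h := fun x => |u x + v x| ^ p)
    (fun n => (hI₁ n).add (hI₂ n)) (fun n => (huw n).integrable_abs_rpow hp0)
    (fun n => .of_forall fun x => by positivity) hbound
    ((hu.add hv).integrable_abs_rpow hp0) ?_ ?_).congr fun n => integral_add (hI₁ n) (hI₂ n)
  · filter_upwards [hgood] with x hx
    exact (tendsto_const_nhds.add hx.2.2).rpow_sub_one_mul_add_abs_rpow hp
      (by simpa using (tendsto_const_nhds (x := v x)).sub hx.2.2)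
  · intro ε hε
    obtain ⟨C, hC⟩ := Real.abs_rpow_sub_one_mul_add_abs_rpow_le hp hε
    refine ⟨C, ?_⟩
    filter_upwards [hgood] with x hx n
    obtain ⟨huv, hux, -⟩ := hx
    have := hC (u x + w n x) (v x - w n x) (hux n) (by linarith)
    rw [show u x + w n x + (v x - w n x) = u x + v x by ring] at this
    rwa [Pi.add_apply, abs_of_nonneg (hux n), abs_of_nonneg huv]

end MeasureTheory

theorem stmt_7_general (N : ℕ) (hN : 3 ≤ N)
    (Ω : Set (EuclideanSpace ℝ (Fin N)))
    (p : ℝ) (hp : p = 2 * N / ((N:ℝ) - 2))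
    (ulam v : EuclideanSpace ℝ (Fin N) → ℝ) (vn : ℕ → EuclideanSpace ℝ (Fin N) → ℝ)
    (hu : MemLp ulam (ENNReal.ofReal p) (volume.restrict Ω))
    (hu0 : ∀ᵐ x ∂(volume.restrict Ω), 0 ≤ ulam x)
    (hv : MemLp v (ENNReal.ofReal p) (volume.restrict Ω))
    (hvn : ∀ n, MemLp (vn n) (ENNReal.ofReal p) (volume.restrict Ω))
    (hvn0 : ∀ n, ∀ᵐ x ∂(volume.restrict Ω), 0 ≤ vn n x)
    (hbdd : ∃ M : ENNReal, M < ⊤ ∧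
      ∀ n, eLpNorm (vn n) (ENNReal.ofReal p) (volume.restrict Ω) ≤ M)
    (hae : ∀ᵐ x ∂(volume.restrict Ω), Tendsto (fun n => vn n x) atTop (𝓝 (v x))) :
    Tendsto (fun n =>
      (∫ x in Ω, (ulam x + vn n x) ^ (p - 1) * (v x - vn n x)) +
        (eLpNorm (fun x => v x - vn n x) (ENNReal.ofReal p) (volume.restrict Ω)).toReal ^ p)
      atTop (𝓝 0) := by
  have hN' : (3 : ℝ) ≤ N := by exact_mod_cast hN
  have hp1 : 1 < p := by
    rw [hp, lt_div_iff₀ (by linarith)]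
    linarith
  exact tendsto_integral_rpow_sub_one_mul_sub_add_eLpNorm_rpow hp1 hu hu0 hv hvn hvn0 hbdd hae

theorem stmt_7 (N : ℕ) (hN : 3 ≤ N)
    (Ω : Set (EuclideanSpace ℝ (Fin N))) (hΩb : Bornology.IsBounded Ω)
    (p : ℝ) (hp : p = 2 * N / ((N:ℝ) - 2))
    (ulam v : EuclideanSpace ℝ (Fin N) → ℝ) (vn : ℕ → EuclideanSpace ℝ (Fin N) → ℝ)
    (hu : MemLp ulam (ENNReal.ofReal p) (volume.restrict Ω))
    (hu0 : ∀ᵐ x ∂(volume.restrict Ω), 0 ≤ ulam x)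
    (hv : MemLp v (ENNReal.ofReal p) (volume.restrict Ω))
    (hvn : ∀ n, MemLp (vn n) (ENNReal.ofReal p) (volume.restrict Ω))
    (hvn0 : ∀ n, ∀ᵐ x ∂(volume.restrict Ω), 0 ≤ vn n x)
    (hbdd : ∃ M : ENNReal, M < ⊤ ∧
      ∀ n, eLpNorm (vn n) (ENNReal.ofReal p) (volume.restrict Ω) ≤ M)
    (hae : ∀ᵐ x ∂(volume.restrict Ω), Tendsto (fun n => vn n x) atTop (𝓝 (v x))) :
    Tendsto (fun n =>
      (∫ x in Ω, (ulam x + vn n x) ^ (p - 1) * (v x - vn n x)) +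
        (eLpNorm (fun x => v x - vn n x) (ENNReal.ofReal p) (volume.restrict Ω)).toReal ^ p)
      atTop (𝓝 0) :=
  stmt_7_general N hN Ω p hp ulam v vn hu hu0 hv hvn hvn0 hbdd hae
end

section
/- Let Ω ⊂ R^N be bounded, N ≥ 3, λ > 0, S > 0 the best Sobolev constant so that S‖v‖_{L^{2*}}² ≤ ‖∇v‖_{L²}² for all v ∈ H¹₀(Ω). Suppose (w_n) ⊂ H¹₀(Ω) satisfies ‖w_n‖_{H¹₀}² − λ‖w_n‖_{L^{2*}}^{2*} = o(1) and ‖w_n‖_{H¹₀}² ≤ c + o(1) with c < S^{N/2}/λ^{(N−2)/2}. Then w_n → 0 strongly in H¹₀(Ω). -/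
open Real MeasureTheory Filter Topology

/-!
Write `s = 2*/2 = N/(N-2)`. The Sobolev inequality gives `λ‖w‖^{2*}_{2*} ≤ λ (‖w‖²/S)^s`, and on the
sublevel `‖w‖² ≤ c'` this is at most `θ ‖w‖²` with `θ = λ c'^{s-1} / S^s`; `θ < 1` exactly when
`c' < S^{N/2} / λ^{(N-2)/2}`. Choosing `c < c'` below that level, eventually
`(1 - θ) ‖w_n‖² ≤ ‖w_n‖² - λ‖w_n‖^{2*}_{2*} → 0`.
-/

theorem tendsto_zero_of_tendsto_sub_of_le_mul {ι : Type*} {l : Filter ι} {A D : ι → ℝ} {θ : ℝ}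
    (hθ : θ < 1) (hA : ∀ i, 0 ≤ A i) (hD : ∀ᶠ i in l, D i ≤ θ * A i)
    (h : Tendsto (fun i => A i - D i) l (𝓝 0)) : Tendsto A l (𝓝 0) := by
  have hsq : Tendsto (fun i => (1 - θ) * A i) l (𝓝 0) := by
    refine squeeze_zero' (Eventually.of_forall fun i => ?_) ?_ h
    · exact mul_nonneg (by linarith) (hA i)
    · filter_upwards [hD] with i hi
      linarith
  simpa [← mul_assoc, inv_mul_cancel₀ (sub_ne_zero.2 hθ.ne')] using hsq.const_mul (1 - θ)⁻¹

theorem le_div_rpow_of_mul_rpow_inv_le {a b S s : ℝ} (hs : 0 < s) (hS : 0 < S) (hb : 0 ≤ b)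
    (h : S * b ^ (1 / s) ≤ a) : b ≤ (a / S) ^ s := by
  have h1 : b ^ (1 / s) ≤ a / S := by rwa [le_div_iff₀ hS, mul_comm]
  calc b = (b ^ (1 / s)) ^ s := by rw [← rpow_mul hb, one_div_mul_cancel hs.ne', rpow_one]
    _ ≤ (a / S) ^ s := rpow_le_rpow (rpow_nonneg hb _) h1 hs.le

theorem div_rpow_le_mul_of_le {a c S s : ℝ} (hs : 1 ≤ s) (hS : 0 < S) (ha : 0 ≤ a) (hac : a ≤ c) :
    (a / S) ^ s ≤ c ^ (s - 1) / S ^ s * a := by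
  have hsplit : (a / S) ^ s = a ^ (s - 1) / S ^ s * a := by
    rw [div_rpow ha hS.le, div_mul_eq_mul_div, ← rpow_add_one' ha (by linarith), sub_add_cancel]
  rw [hsplit]
  gcongr

theorem mul_rpow_sub_one_div_lt_one {c lam S s : ℝ} (hs : 1 < s) (hlam : 0 < lam) (hS : 0 < S)
    (hc0 : 0 ≤ c) (hc : c < S ^ (s / (s - 1)) / lam ^ (1 / (s - 1))) :
    lam * c ^ (s - 1) / S ^ s < 1 := by
  have hs1 : 0 < s - 1 := by linarith
  have hlevel : (S ^ (s / (s - 1)) / lam ^ (1 / (s - 1))) ^ (s - 1) = S ^ s / lam := by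
    rw [div_rpow (rpow_nonneg hS.le _) (rpow_nonneg hlam.le _), ← rpow_mul hS.le,
      ← rpow_mul hlam.le, div_mul_cancel₀ _ hs1.ne', div_mul_cancel₀ _ hs1.ne', rpow_one]
  have hlt : c ^ (s - 1) < S ^ s / lam := hlevel ▸ rpow_lt_rpow hc0 hc hs1
  rw [div_lt_one (rpow_pos_of_pos hS _)]
  calc lam * c ^ (s - 1) < lam * (S ^ s / lam) := by gcongr
    _ = S ^ s := mul_div_cancel₀ _ hlam.ne'

theorem tendsto_zero_of_le_critical_level {ι : Type*} {l : Filter ι} {A B e : ι → ℝ}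
    {s lam S c : ℝ} (hs : 1 < s) (hlam : 0 < lam) (hS : 0 < S) (hB : ∀ i, 0 ≤ B i)
    (hSob : ∀ i, S * B i ^ (1 / s) ≤ A i) (hPS : Tendsto (fun i => A i - lam * B i) l (𝓝 0))
    (he : Tendsto e l (𝓝 0)) (hAe : ∀ i, A i ≤ c + e i)
    (hc : c < S ^ (s / (s - 1)) / lam ^ (1 / (s - 1))) : Tendsto A l (𝓝 0) := by
  have hA : ∀ i, 0 ≤ A i := fun i =>
    (mul_nonneg hS.le (rpow_nonneg (hB i) _)).trans (hSob i)
  have hlevel : 0 < S ^ (s / (s - 1)) / lam ^ (1 / (s - 1)) := by positivity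
  obtain ⟨c', hcc', hc'⟩ := exists_between (max_lt hc hlevel)
  have hc'0 : 0 ≤ c' := (le_max_right c 0).trans hcc'.le
  have hAc' : ∀ᶠ i in l, A i ≤ c' := by
    filter_upwards [he.eventually (gt_mem_nhds (sub_pos.2 ((le_max_left c 0).trans_lt hcc')))]
      with i hi
    linarith [hAe i]
  refine tendsto_zero_of_tendsto_sub_of_le_mul
    (mul_rpow_sub_one_div_lt_one hs hlam hS hc'0 hc') hA ?_ hPS
  filter_upwards [hAc'] with i hi
  calc lam * B i ≤ lam * (A i / S) ^ s :=
        mul_le_mul_of_nonneg_left (le_div_rpow_of_mul_rpow_inv_le (by linarith) hS (hB i) (hSob i))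
          hlam.le
    _ ≤ lam * (c' ^ (s - 1) / S ^ s * A i) :=
        mul_le_mul_of_nonneg_left (div_rpow_le_mul_of_le hs.le hS (hA i) hi) hlam.le
    _ = lam * c' ^ (s - 1) / S ^ s * A i := by ring

theorem stmt_11_general (N : ℕ) (hN : 3 ≤ N)
    (Ω : Set (EuclideanSpace ℝ (Fin N)))
    (lam S c : ℝ) (hlam : 0 < lam) (hS : 0 < S)
    (w : ℕ → EuclideanSpace ℝ (Fin N) → ℝ) :
    let p : ℝ := 2 * N / ((N:ℝ) - 2)
    -- squared H¹₀ norm and 2*-power of the L^{2*} norm of w n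
    let A : ℕ → ℝ := fun n => ∫ x in Ω, ‖gradient (w n) x‖ ^ 2
    let B : ℕ → ℝ := fun n => ∫ x in Ω, |w n x| ^ p
    -- S is the best Sobolev constant: S ‖v‖²_{L^{2*}} ≤ ‖∇v‖²_{L²}
    (∀ n, S * B n ^ (2 / p) ≤ A n) →
    -- ‖w_n‖² − λ‖w_n‖_{2*}^{2*} = o(1)
    Tendsto (fun n => A n - lam * B n) atTop (𝓝 0) →
    -- ‖w_n‖² ≤ c + o(1)
    (∃ e : ℕ → ℝ, Tendsto e atTop (𝓝 0) ∧ ∀ n, A n ≤ c + e n) →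
    c < S ^ ((N:ℝ) / 2) / lam ^ (((N:ℝ) - 2) / 2) →
    -- w_n → 0 strongly in H¹₀(Ω)
    Tendsto A atTop (𝓝 0) := by
  intro p A B hSob hPS ⟨e, he, hAe⟩ hc
  have hN2 : (0 : ℝ) < N - 2 := by
    have : (3 : ℝ) ≤ N := by exact_mod_cast hN
    linarith
  have hs : 1 < p / 2 := by
    rw [lt_div_iff₀ two_pos, lt_div_iff₀ hN2]
    linarith
  have hinv : 1 / (p / 2) = 2 / p := one_div_div p 2
  have hsexp : p / 2 / (p / 2 - 1) = (N : ℝ) / 2 := by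
    simp only [p]; field_simp; ring
  have hlexp : 1 / (p / 2 - 1) = ((N : ℝ) - 2) / 2 := by
    simp only [p]; field_simp; ring
  refine tendsto_zero_of_le_critical_level hs hlam hS
    (fun n => integral_nonneg fun x => rpow_nonneg (abs_nonneg _) p)
    (hinv ▸ hSob) hPS he hAe (by rwa [hsexp, hlexp])

theorem stmt_11 (N : ℕ) (hN : 3 ≤ N)
    (Ω : Set (EuclideanSpace ℝ (Fin N))) (hΩb : Bornology.IsBounded Ω)
    (lam S c : ℝ) (hlam : 0 < lam) (hS : 0 < S)
    (w : ℕ → EuclideanSpace ℝ (Fin N) → ℝ) :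
    let p : ℝ := 2 * N / ((N:ℝ) - 2)
    -- squared H¹₀ norm and 2*-power of the L^{2*} norm of w n
    let A : ℕ → ℝ := fun n => ∫ x in Ω, ‖gradient (w n) x‖ ^ 2
    let B : ℕ → ℝ := fun n => ∫ x in Ω, |w n x| ^ p
    -- S is the best Sobolev constant: S ‖v‖²_{L^{2*}} ≤ ‖∇v‖²_{L²}
    (∀ n, S * B n ^ (2 / p) ≤ A n) →
    -- ‖w_n‖² − λ‖w_n‖_{2*}^{2*} = o(1)
    Tendsto (fun n => A n - lam * B n) atTop (𝓝 0) →
    -- ‖w_n‖² ≤ c + o(1)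
    (∃ e : ℕ → ℝ, Tendsto e atTop (𝓝 0) ∧ ∀ n, A n ≤ c + e n) →
    c < S ^ ((N:ℝ) / 2) / lam ^ (((N:ℝ) - 2) / 2) →
    -- w_n → 0 strongly in H¹₀(Ω)
    Tendsto A atTop (𝓝 0) :=
  stmt_11_general N hN Ω lam S c hlam hS w
end
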